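/- There exists a finite rotation-puzzle instance 𝒜 over the three-color tile set T_3 (the AND subpuzzle, simulating an AND gate) with two designated input boundary edges at its bottom and one designated output boundary edge at its top, such that for each pair of colors (c₁, c₂) ∈ {blue, red}² the instance 𝒜 has exactly one solution whose colors at the two input edges are c₁ and c₂ respectively, and this solution has color blue at the output edge if c₁ = c₂ = blue, and color red at the output edge otherwise. -/

import Mathlib

/-- The three Tantrix colors used in the three-color tile set. -/
inductive Color where
  | red
  | yellow
  | blue
deriving DecidableEq

/-- A tile is its clockwise color sequence: a word of length 6 over the colors,
edges indexed `0, …, 5` clockwise. -/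
abbrev Tile := Fin 6 → Color

/-- Cyclic rotation of a tile by `k` steps: edge `i` of the rotated tile carries the
color of edge `i + k` of the original sequence. -/
def rotTile (k : Fin 6) (t : Tile) : Tile := fun i => t (i + k)

open Color in
/-- The three-color tile set `T₃`, consisting of the 14 color sequences
yrrbby, ryybbr, yrrybb, ryyrbb, brrbyy, yrbybr, rbyryb, brybyr, brbyyr, bybrry,
ryrbby, rbryyb, ybyrrb, yrybbr. -/
def T3 : Set Tile :=
  { ![yellow,red,red,blue,blue,yellow],
    ![red,yellow,yellow,blue,blue,red],
    ![yellow,red,red,yellow,blue,blue],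
    ![red,yellow,yellow,red,blue,blue],
    ![blue,red,red,blue,yellow,yellow],
    ![yellow,red,blue,yellow,blue,red],
    ![red,blue,yellow,red,yellow,blue],
    ![blue,red,yellow,blue,yellow,red],
    ![blue,red,blue,yellow,yellow,red],
    ![blue,yellow,blue,red,red,yellow],
    ![red,yellow,red,blue,blue,yellow],
    ![red,blue,red,yellow,yellow,blue],
    ![yellow,blue,yellow,red,red,blue],
    ![yellow,red,yellow,blue,blue,red] }

/-- The six neighbor offsets of the hexagonal layout of `ℤ²`, listed clockwise
starting from straight up; edge `i` of a tile at `x` is the edge shared with the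
neighboring point `x + dirs i`, and opposite directions differ by `3` (mod 6).
Two points are neighbors exactly if their difference is one of these offsets. -/
def dirs : Fin 6 → ℤ × ℤ := ![(0,1), (1,1), (1,0), (0,-1), (-1,-1), (-1,0)]

/-- A finite rotation-puzzle instance over the tile set `T3`:
a function from a finite set of points of `ℤ²` to `T3`. -/
structure Puzzle where
  tiles : ℤ × ℤ → Option Tile
  finite : {x | tiles x ≠ none}.Finite
  memT3 : ∀ x t, tiles x = some t → t ∈ T3

/-- `sol` is a solution of the instance `P`: it assigns to each occupied point a
cyclic rotation of the tile placed there, such that for every pair of neighboring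
occupied points the two assigned sequences give the same color to their joint edge
(edge `d` of the tile at `x` is glued to edge `d + 3` of the tile at `x + dirs d`). -/
def IsSolution (P : Puzzle) (sol : ℤ × ℤ → Option Tile) : Prop :=
  (∀ x, (P.tiles x = none → sol x = none) ∧
    (∀ t, P.tiles x = some t → ∃ k : Fin 6, sol x = some (rotTile k t))) ∧
  (∀ (x : ℤ × ℤ) (d : Fin 6) (s s' : Tile),
    sol x = some s → sol (x + dirs d) = some s' → s d = s' (d + 3))

/-- `(x, d)` is a boundary edge of `P`: the point `x` is occupied and its
neighbor in direction `d` is not. -/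
def IsBoundary (P : Puzzle) (x : ℤ × ℤ) (d : Fin 6) : Prop :=
  P.tiles x ≠ none ∧ P.tiles (x + dirs d) = none

/-- The solution `sol` has color `c` at the edge in direction `d` of the tile at `x`. -/
def SolColor (sol : ℤ × ℤ → Option Tile) (x : ℤ × ℤ) (d : Fin 6) (c : Color) : Prop :=
  ∃ s, sol x = some s ∧ s d = c

/-!
The AND gate is the rhombus of four tiles ryybbr, bybrry, yrrbby, ryybbr at `(0,0)`, `(1,0)`,
`(0,1)`, `(1,1)`, with inputs below the two bottom tiles and the output above `(0,1)`.
Every solution of an instance is obtained by choosing one rotation per tile, so existence and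
uniqueness of the solution for given input colors reduce to a finite check over the `6⁴`
rotation assignments, which the kernel carries out.
-/

open Function Color

noncomputable def place {ι : Type*} (pos : ι ↪ ℤ × ℤ) (s : ι → Tile) : ℤ × ℤ → Option Tile :=
  fun x => (partialInv pos x).map s

def rotateAll {ι : Type*} (k : ι → Fin 6) (t : ι → Tile) : ι → Tile :=
  fun i => rotTile (k i) (t i)

def EdgesMatch {ι : Type*} (pos : ι → ℤ × ℤ) (s : ι → Tile) : Prop :=
  ∀ i j d, pos i + dirs d = pos j → s i d = s j (d + 3)

instance {ι : Type*} [Fintype ι] (pos : ι → ℤ × ℤ) : DecidablePred (EdgesMatch pos) :=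
  fun s => by unfold EdgesMatch; infer_instance

section Placement

variable {ι : Type*} {pos : ι ↪ ℤ × ℤ} {s : ι → Tile} {x : ℤ × ℤ}

theorem place_eq_some_iff {u : Tile} : place pos s x = some u ↔ ∃ i, pos i = x ∧ s i = u := by
  simp only [place, Option.map_eq_some_iff, pos.injective.isPartialInv _ x]

theorem place_apply (i : ι) : place pos s (pos i) = some (s i) := by
  simp only [place, partialInv_left pos.injective, Option.map_some]

theorem place_eq_none_iff : place pos s x = none ↔ ∀ i, pos i ≠ x := by
  rw [Option.eq_none_iff_forall_ne_some]
  simp only [ne_eq, place_eq_some_iff, not_exists, not_and]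
  exact ⟨fun h i hi => h (s i) i hi rfl, fun h u i hi => absurd hi (h i)⟩

theorem solColor_place_iff {i : ι} {d : Fin 6} {c : Color} :
    SolColor (place pos s) (pos i) d c ↔ s i d = c := by
  simp only [SolColor, place_apply, Option.some.injEq, exists_eq_left']

end Placement

noncomputable def Puzzle.ofEmbedding {ι : Type*} [Finite ι] (pos : ι ↪ ℤ × ℤ) (t : ι → Tile)
    (ht : ∀ i, t i ∈ T3) : Puzzle where
  tiles := place pos t
  finite := (Set.finite_range pos).subset fun x hx => by
    by_contra hx'
    exact hx (place_eq_none_iff.2 fun i hi => hx' ⟨i, hi⟩)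
  memT3 x u hu := by
    obtain ⟨i, -, rfl⟩ := place_eq_some_iff.1 hu
    exact ht i

section Solutions

variable {ι : Type*} [Finite ι] {pos : ι ↪ ℤ × ℤ} {t : ι → Tile} {ht : ∀ i, t i ∈ T3}

theorem isBoundary_ofEmbedding_iff {i : ι} {d : Fin 6} :
    IsBoundary (.ofEmbedding pos t ht) (pos i) d ↔ ∀ j, pos j ≠ pos i + dirs d := by
  simp only [IsBoundary, Puzzle.ofEmbedding, place_apply, place_eq_none_iff, ne_eq,
    reduceCtorEq, not_false_eq_true, true_and]

theorem IsSolution.exists_rotation {sol : ℤ × ℤ → Option Tile}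
    (hs : IsSolution (.ofEmbedding pos t ht) sol) :
    ∃ k : ι → Fin 6, sol = place pos (rotateAll k t) ∧ EdgesMatch pos (rotateAll k t) := by
  choose k hk using fun i => (hs.1 (pos i)).2 (t i) (place_apply i)
  have hsol : sol = place pos (rotateAll k t) := by
    funext x
    by_cases hx : ∃ i, pos i = x
    · obtain ⟨i, rfl⟩ := hx
      rw [hk, place_apply]
      rfl
    · have hnone : ∀ i, pos i ≠ x := fun i hi => hx ⟨i, hi⟩
      rw [(hs.1 x).1 (place_eq_none_iff.2 hnone), place_eq_none_iff.2 hnone]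
  refine ⟨k, hsol, fun i j d hij => hs.2 (pos i) d _ _ ?_ ?_⟩
  · rw [hsol, place_apply]
  · rw [hij, hsol, place_apply]

theorem isSolution_ofEmbedding_place {k : ι → Fin 6} (hk : EdgesMatch pos (rotateAll k t)) :
    IsSolution (.ofEmbedding pos t ht) (place pos (rotateAll k t)) := by
  refine ⟨fun x => ⟨fun hx => ?_, fun u hu => ?_⟩, fun x d s s' hs hs' => ?_⟩
  · exact place_eq_none_iff.2 (place_eq_none_iff.1 hx)
  · obtain ⟨i, rfl, rfl⟩ := place_eq_some_iff.1 hu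
    exact ⟨k i, place_apply i⟩
  · obtain ⟨i, rfl, rfl⟩ := place_eq_some_iff.1 hs
    obtain ⟨j, hj, rfl⟩ := place_eq_some_iff.1 hs'
    exact hk i j d hj.symm

end Solutions

def andPos : Fin 4 ↪ ℤ × ℤ := ⟨![(0, 0), (1, 0), (0, 1), (1, 1)], by decide⟩

def andTiles : Fin 4 → Tile :=
  ![![red, yellow, yellow, blue, blue, red], ![blue, yellow, blue, red, red, yellow],
    ![yellow, red, red, blue, blue, yellow], ![red, yellow, yellow, blue, blue, red]]

theorem andTiles_mem_T3 : ∀ i, andTiles i ∈ T3 := by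
  intro i; fin_cases i <;> simp [T3, andTiles]

def andRotation : Color → Color → Fin 4 → Fin 6
  | blue, blue => ![1, 3, 3, 3]
  | blue, _ => ![1, 1, 2, 4]
  | _, blue => ![3, 5, 1, 5]
  | _, _ => ![2, 1, 2, 5]

theorem andRotation_spec : ∀ c₁ ∈ [blue, red], ∀ c₂ ∈ [blue, red],
    EdgesMatch andPos (rotateAll (andRotation c₁ c₂) andTiles) ∧
      rotateAll (andRotation c₁ c₂) andTiles 0 3 = c₁ ∧
      rotateAll (andRotation c₁ c₂) andTiles 1 3 = c₂ ∧
      rotateAll (andRotation c₁ c₂) andTiles 2 0 =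
        if c₁ = blue ∧ c₂ = blue then blue else red := by
  decide

theorem eq_andRotation : ∀ c₁ ∈ [blue, red], ∀ c₂ ∈ [blue, red], ∀ k : Fin 4 → Fin 6,
    rotateAll k andTiles 0 3 = c₁ → rotateAll k andTiles 1 3 = c₂ →
      EdgesMatch andPos (rotateAll k andTiles) → k = andRotation c₁ c₂ := by
  decide +kernel

/-- the three-color AND subpuzzle: two input boundary edges at the bottom, one output boundary edge at the top; for each pair `(c₁, c₂) ∈ {blue, red}²` there is exactly one solution with colors `c₁`, `c₂` at the input edges, and it has color blue at the output edge if `c₁ = c₂ = blue` and color red otherwise. -/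
theorem three_color_AND_subpuzzle :
    ∃ (P : Puzzle) (iL iR xOut : ℤ × ℤ),
      IsBoundary P iL 3 ∧ IsBoundary P iR 3 ∧ IsBoundary P xOut 0 ∧
      iL ≠ iR ∧ iL.2 < xOut.2 ∧ iR.2 < xOut.2 ∧
      ∀ c₁ ∈ ({Color.blue, Color.red} : Set Color),
        ∀ c₂ ∈ ({Color.blue, Color.red} : Set Color),
          ∃ sol : ℤ × ℤ → Option Tile,
            (IsSolution P sol ∧ SolColor sol iL 3 c₁ ∧ SolColor sol iR 3 c₂ ∧
              SolColor sol xOut 0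
                (if c₁ = Color.blue ∧ c₂ = Color.blue then Color.blue else Color.red)) ∧
            (∀ sol' : ℤ × ℤ → Option Tile,
              IsSolution P sol' → SolColor sol' iL 3 c₁ → SolColor sol' iR 3 c₂ →
                sol' = sol) := by
  refine ⟨.ofEmbedding andPos andTiles andTiles_mem_T3, andPos 0, andPos 1, andPos 2,
    isBoundary_ofEmbedding_iff.2 (by decide), isBoundary_ofEmbedding_iff.2 (by decide),
    isBoundary_ofEmbedding_iff.2 (by decide), by decide, by decide, by decide, ?_⟩
  intro c₁ hc₁ c₂ hc₂
  replace hc₁ : c₁ ∈ [blue, red] := by simpa using hc₁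
  replace hc₂ : c₂ ∈ [blue, red] := by simpa using hc₂
  obtain ⟨hmatch, hin₁, hin₂, hout⟩ := andRotation_spec c₁ hc₁ c₂ hc₂
  refine ⟨place andPos (rotateAll (andRotation c₁ c₂) andTiles),
    ⟨isSolution_ofEmbedding_place hmatch, solColor_place_iff.2 hin₁,
      solColor_place_iff.2 hin₂, solColor_place_iff.2 hout⟩, fun sol' hs' hin₁' hin₂' => ?_⟩
  obtain ⟨k, rfl, hk⟩ := hs'.exists_rotation
  rw [eq_andRotation c₁ hc₁ c₂ hc₂ k (solColor_place_iff.1 hin₁')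
    (solColor_place_iff.1 hin₂') hk]
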